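/- In a Nelson lattice A, the relation defined by x ≡ y iff x² = y² is a congruence with respect to ∧, ∨, and the operation x → y := x² ⇒ y. -/

import Mathlib

/-- A Nelson (residuated) lattice: a bounded lattice with a commutative monoid
operation `mul` (unit `⊤`) residuated by `imp`, which is involutive
(`∼∼a = a` where `∼a = a ⇒ ⊥`) and satisfies the Nelson identity
`((a² ⇒ b) ⊓ ((∼b)² ⇒ ∼a)) ⇒ (a ⇒ b) = ⊤`. -/
structure NelsonStruct (A : Type*) [Lattice A] [BoundedOrder A] where
  mul : A → A → A
  imp : A → A → A
  mul_comm : ∀ a b, mul a b = mul b a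
  mul_assoc : ∀ a b c, mul (mul a b) c = mul a (mul b c)
  top_mul : ∀ a, mul ⊤ a = a
  res : ∀ a b c, mul a b ≤ c ↔ b ≤ imp a c
  involutive : ∀ a, imp (imp a ⊥) ⊥ = a
  nelson : ∀ a b,
    imp ((imp (mul a a) b) ⊓
         (imp (mul (imp b ⊥) (imp b ⊥)) (imp a ⊥))) (imp a b) = ⊤

namespace NelsonStruct

variable {A : Type*} [Lattice A] [BoundedOrder A] (N : NelsonStruct A)

/-- The square `a² = a * a`. -/
def sq (a : A) : A := N.mul a a

/-- The strong negation `∼a = a ⇒ ⊥`. -/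
def sneg (a : A) : A := N.imp a ⊥

end NelsonStruct

/-!
The Nelson identity is used only through the criterion "`a² ≤ b` and `(∼b)² ≤ ∼a` imply
`a ≤ b`", mostly with `b = ∼c`: `a ⊙ c ≤ ⊥` as soon as `a² ⊙ c ≤ ⊥` and `a ⊙ c² ≤ ⊥`.
Applied twice it shows that `z⁴ ≤ ⊥` forces `z² ≤ ⊥`; with `z = w ⊙ a` and `w = ∼(a⁴)` this
gives `a² ≤ a⁴`, so squares are idempotent. Consequently `x² = y²` holds iff `x² ≤ y` and
`y² ≤ x`, and it remains to check that the relation `x² ≤ y` is preserved by `⊓`, by `⊔` and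
by `a² ⇒ -`. For `⊔` the only nontrivial term of `(x ⊔ s)²` is the cross term `x ⊙ s`, which
the criterion bounds by `y ⊔ t`.
-/

namespace NelsonStruct

variable {A : Type*} [Lattice A] [BoundedOrder A] (N : NelsonStruct A)

local infixl:70 " ⊙ " => N.mul

theorem mul_top (a : A) : a ⊙ ⊤ = a := by
  rw [N.mul_comm, N.top_mul]

theorem le_iff_imp_eq_top {a b : A} : a ≤ b ↔ N.imp a b = ⊤ := by
  rw [← top_le_iff, ← N.res, N.mul_top]

theorem mul_le_left (a b : A) : a ⊙ b ≤ a :=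
  (N.res a b a).2 (le_top.trans_eq (N.le_iff_imp_eq_top.1 le_rfl).symm)

theorem mul_le_right (a b : A) : a ⊙ b ≤ b :=
  N.mul_comm b a ▸ N.mul_le_left b a

theorem mul_imp_le (a b : A) : a ⊙ N.imp a b ≤ b :=
  (N.res a _ b).2 le_rfl

theorem mul_le_mul_left {a b : A} (h : a ≤ b) (c : A) : c ⊙ a ≤ c ⊙ b :=
  (N.res c a _).2 (h.trans ((N.res c b _).1 le_rfl))

theorem mul_le_mul {a b c d : A} (hab : a ≤ b) (hcd : c ≤ d) : a ⊙ c ≤ b ⊙ d :=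
  calc a ⊙ c = c ⊙ a := N.mul_comm a c
    _ ≤ c ⊙ b := N.mul_le_mul_left hab c
    _ = b ⊙ c := N.mul_comm c b
    _ ≤ b ⊙ d := N.mul_le_mul_left hcd b

theorem imp_le_imp_right {a b : A} (h : a ≤ b) (c : A) : N.imp b c ≤ N.imp a c :=
  (N.res a _ c).1 ((N.mul_le_mul h le_rfl).trans (N.mul_imp_le b c))

theorem mul_mul_mul_comm (a b c d : A) : a ⊙ b ⊙ (c ⊙ d) = a ⊙ c ⊙ (b ⊙ d) := by
  rw [N.mul_assoc, N.mul_assoc, ← N.mul_assoc b, N.mul_comm b c, N.mul_assoc]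

theorem mul_sup (a b c : A) : a ⊙ (b ⊔ c) = a ⊙ b ⊔ a ⊙ c := by
  refine le_antisymm ((N.res a _ _).2 (sup_le ?_ ?_)) ?_
  · exact (N.res a b _).1 le_sup_left
  · exact (N.res a c _).1 le_sup_right
  · exact sup_le (N.mul_le_mul_left le_sup_left a) (N.mul_le_mul_left le_sup_right a)

theorem sup_mul (a b c : A) : (a ⊔ b) ⊙ c = a ⊙ c ⊔ b ⊙ c := by
  rw [N.mul_comm, N.mul_sup, N.mul_comm c a, N.mul_comm c b]

theorem mul_le_bot_iff {a b : A} : a ⊙ b ≤ ⊥ ↔ b ≤ N.sneg a :=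
  N.res a b ⊥

theorem mul_sneg_le_bot (a : A) : a ⊙ N.sneg a ≤ ⊥ :=
  N.mul_imp_le a ⊥

theorem sneg_sneg (a : A) : N.sneg (N.sneg a) = a :=
  N.involutive a

theorem sq_le (a : A) : N.sq a ≤ a :=
  N.mul_le_left a a

theorem sq_mono {a b : A} (h : a ≤ b) : N.sq a ≤ N.sq b :=
  N.mul_le_mul h h

theorem sq_mul (a b : A) : N.sq (a ⊙ b) = N.sq a ⊙ N.sq b :=
  N.mul_mul_mul_comm a b a b

theorem le_of_sq_le_of_sq_sneg_le {a b : A} (h₁ : N.sq a ≤ b)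
    (h₂ : N.sq (N.sneg b) ≤ N.sneg a) : a ≤ b := by
  have h := N.nelson a b
  rw [N.le_iff_imp_eq_top] at h₁ h₂ ⊢
  simp only [sq, sneg] at h₁ h₂
  rwa [h₁, h₂, inf_idem, ← N.le_iff_imp_eq_top, top_le_iff] at h

theorem mul_le_bot_of_sq_mul_le_bot {a c : A} (h₁ : N.sq a ⊙ c ≤ ⊥) (h₂ : a ⊙ N.sq c ≤ ⊥) :
    a ⊙ c ≤ ⊥ := by
  refine N.mul_le_bot_iff.2 (N.le_of_sq_le_of_sq_sneg_le (N.mul_le_bot_iff.1 h₂) ?_)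
  rw [N.sneg_sneg, ← N.mul_le_bot_iff, N.mul_comm]
  exact h₁

theorem mul_le_bot_of_sq_le_bot {a c : A} (ha : N.sq a ≤ ⊥) (hc : N.sq c ≤ ⊥) : a ⊙ c ≤ ⊥ :=
  N.mul_le_bot_of_sq_mul_le_bot ((N.mul_le_left _ c).trans ha) ((N.mul_le_right a _).trans hc)

theorem sq_le_bot_of_sq_sq_le_bot {a : A} (h : N.sq (N.sq a) ≤ ⊥) : N.sq a ≤ ⊥ := by
  have hcube : N.sq a ⊙ a ≤ ⊥ := N.mul_le_bot_of_sq_mul_le_bot ((N.mul_le_left _ a).trans h) h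
  exact N.mul_le_bot_of_sq_mul_le_bot hcube (N.mul_comm a _ ▸ hcube)

theorem sq_sq (a : A) : N.sq (N.sq a) = N.sq a := by
  set w := N.sneg (N.sq (N.sq a))
  have hw : w ⊙ N.sq (N.sq a) ≤ ⊥ := N.mul_comm _ w ▸ N.mul_sneg_le_bot _
  have hwa : N.sq (w ⊙ a) ≤ ⊥ := N.sq_le_bot_of_sq_sq_le_bot <|
    calc N.sq (N.sq (w ⊙ a)) = N.sq (N.sq w) ⊙ N.sq (N.sq a) := by rw [N.sq_mul, N.sq_mul]
      _ ≤ w ⊙ N.sq (N.sq a) := N.mul_le_mul ((N.sq_le _).trans (N.sq_le w)) le_rfl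
      _ ≤ ⊥ := hw
  have hwq : w ⊙ N.sq a ≤ ⊥ := N.mul_le_bot_of_sq_mul_le_bot (N.sq_mul w a ▸ hwa) hw
  refine le_antisymm (N.sq_le _) ?_
  rw [← N.sneg_sneg (N.sq (N.sq a))]
  exact N.mul_le_bot_iff.1 hwq

theorem sq_eq_sq_iff {a b : A} : N.sq a = N.sq b ↔ N.sq a ≤ b ∧ N.sq b ≤ a := by
  refine ⟨fun h => ⟨h.trans_le (N.sq_le b), h.symm.trans_le (N.sq_le a)⟩, ?_⟩
  rintro ⟨hab, hba⟩
  exact le_antisymm ((N.sq_sq a).symm.trans_le (N.sq_mono hab))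
    ((N.sq_sq b).symm.trans_le (N.sq_mono hba))

theorem sq_inf_le {x y s t : A} (hx : N.sq x ≤ y) (hs : N.sq s ≤ t) : N.sq (x ⊓ s) ≤ y ⊓ t :=
  le_inf ((N.sq_mono inf_le_left).trans hx) ((N.sq_mono inf_le_right).trans hs)

theorem sq_mul_sneg_le_bot {x y : A} (h : N.sq x ≤ y) : N.sq (x ⊙ N.sneg y) ≤ ⊥ :=
  calc N.sq (x ⊙ N.sneg y) = N.sq x ⊙ N.sq (N.sneg y) := N.sq_mul x _
    _ ≤ y ⊙ N.sneg y := N.mul_le_mul h (N.sq_le _)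
    _ ≤ ⊥ := N.mul_sneg_le_bot y

theorem mul_le_sup_of_sq_le {x y s t : A} (hx : N.sq x ≤ y) (hs : N.sq s ≤ t) :
    x ⊙ s ≤ y ⊔ t := by
  refine N.le_of_sq_le_of_sq_sneg_le ?_ (N.mul_le_bot_iff.1 ?_)
  · calc N.sq (x ⊙ s) = N.sq x ⊙ N.sq s := N.sq_mul x s
      _ ≤ y := (N.mul_le_left _ _).trans hx
      _ ≤ y ⊔ t := le_sup_left
  · set n := N.sneg (y ⊔ t)
    calc x ⊙ s ⊙ N.sq n = x ⊙ n ⊙ (s ⊙ n) := N.mul_mul_mul_comm x s n n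
      _ ≤ x ⊙ N.sneg y ⊙ (s ⊙ N.sneg t) :=
        N.mul_le_mul (N.mul_le_mul_left (N.imp_le_imp_right le_sup_left ⊥) x)
          (N.mul_le_mul_left (N.imp_le_imp_right le_sup_right ⊥) s)
      _ ≤ ⊥ := N.mul_le_bot_of_sq_le_bot (N.sq_mul_sneg_le_bot hx) (N.sq_mul_sneg_le_bot hs)

theorem sq_sup_le {x y s t : A} (hx : N.sq x ≤ y) (hs : N.sq s ≤ t) : N.sq (x ⊔ s) ≤ y ⊔ t := by
  have hxs := N.mul_le_sup_of_sq_le hx hs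
  have hsx : s ⊙ x ≤ y ⊔ t := N.mul_comm x s ▸ hxs
  simp only [sq, N.mul_sup, N.sup_mul]
  exact sup_le (sup_le (hx.trans le_sup_left) hsx) (sup_le hxs (hs.trans le_sup_right))

theorem sq_imp_sq_le (a : A) {s t : A} (h : N.sq s ≤ t) :
    N.sq (N.imp (N.sq a) s) ≤ N.imp (N.sq a) t := by
  refine (N.res _ _ t).1 ?_
  calc N.sq a ⊙ N.sq (N.imp (N.sq a) s)
      = N.sq (N.sq a) ⊙ N.sq (N.imp (N.sq a) s) := by rw [N.sq_sq]
    _ = N.sq (N.sq a ⊙ N.imp (N.sq a) s) := (N.sq_mul _ _).symm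
    _ ≤ N.sq s := N.sq_mono (N.mul_imp_le _ s)
    _ ≤ t := h

end NelsonStruct

/-- In a Nelson lattice `A`, the relation `x ≡ y ↔ x² = y²` is a
congruence with respect to `⊓`, `⊔` and the weak implication
`x → y := x² ⇒ y`. -/
theorem NelsonStruct.sq_congruence {A : Type*} [Lattice A] [BoundedOrder A]
    (N : NelsonStruct A) (x y s t : A)
    (hxy : N.sq x = N.sq y) (hst : N.sq s = N.sq t) :
    N.sq (x ⊓ s) = N.sq (y ⊓ t) ∧
    N.sq (x ⊔ s) = N.sq (y ⊔ t) ∧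
    N.sq (N.imp (N.sq x) s) = N.sq (N.imp (N.sq y) t) := by
  obtain ⟨hxy', hyx⟩ := N.sq_eq_sq_iff.1 hxy
  obtain ⟨hst', hts⟩ := N.sq_eq_sq_iff.1 hst
  refine ⟨N.sq_eq_sq_iff.2 ⟨N.sq_inf_le hxy' hst', N.sq_inf_le hyx hts⟩,
    N.sq_eq_sq_iff.2 ⟨N.sq_sup_le hxy' hst', N.sq_sup_le hyx hts⟩, ?_⟩
  rw [hxy]
  exact N.sq_eq_sq_iff.2 ⟨N.sq_imp_sq_le y hst', N.sq_imp_sq_le y hts⟩
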